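/- arXiv:1802.08957 — 4 statements merged into one kernel-verified Lean document; each statement's English description precedes it below -/
import Mathlib

section
/- With the notation of the post-measurement Bloch vectors x̃₀, x̃₁ corresponding to projective measurement directions n̂ and −n̂ on the second qubit, the squared Euclidean distance satisfies ‖x̃₀ − x̃₁‖² = 4 n̂ᵗ M n̂ / (1 − n̂ᵗ Y n̂)², where Y = y yᵗ, m = T − x yᵗ, and M = mᵗ m, provided 1 − (y·n̂)² ≠ 0. -/
open Matrix Complex Kronecker
open scoped ComplexOrder

noncomputable section

def pauli (i : Fin 3) : Matrix (Fin 2) (Fin 2) ℂ :=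
  if i = 0 then !![0, 1; 1, 0]
  else if i = 1 then !![0, -I; I, 0]
  else !![1, 0; 0, -1]

def dotsigma (x : Fin 3 → ℝ) : Matrix (Fin 2) (Fin 2) ℂ :=
  ∑ i, (x i : ℂ) • pauli i

def dot3 (x y : Fin 3 → ℝ) : ℝ := ∑ i, x i * y i

def norm3 (x : Fin 3 → ℝ) : ℝ := Real.sqrt (∑ i, (x i) ^ 2)

def trB (A : Matrix (Fin 2 × Fin 2) (Fin 2 × Fin 2) ℂ) : Matrix (Fin 2) (Fin 2) ℂ :=
  Matrix.of fun i j => ∑ k, A (i, k) (j, k)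

def trA (A : Matrix (Fin 2 × Fin 2) (Fin 2 × Fin 2) ℂ) : Matrix (Fin 2) (Fin 2) ℂ :=
  Matrix.of fun i j => ∑ k, A (k, i) (k, j)

/-! Since `y · (-n̂) = -(y · n̂)` and `T(-n̂) = -Tn̂`, the difference of the two vectors collapses
to `x̃₀ - x̃₁ = 2 (T - x yᵗ) n̂ / (1 - (y · n̂)²)`; its squared norm is `4 n̂ᵗ M n̂` over the
squared denominator, and `n̂ᵗ Y n̂ = (y · n̂)²`. -/

section

variable {ι κ R : Type*} [Fintype κ] [CommRing R]

lemma dotProduct_transpose_mul_self_mulVec [Fintype ι] (A : Matrix ι κ R) (v : κ → R) :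
    v ⬝ᵥ (Aᵀ * A) *ᵥ v = (A *ᵥ v) ⬝ᵥ (A *ᵥ v) := by
  rw [← mulVec_mulVec, dotProduct_mulVec, vecMul_transpose]

lemma sub_vecMulVec_mulVec (T : Matrix ι κ R) (x : ι → R) (y v : κ → R) :
    (T - vecMulVec x y) *ᵥ v = T *ᵥ v - (y ⬝ᵥ v) • x := by
  rw [sub_mulVec, vecMulVec_mulVec, op_smul_eq_smul]

lemma dotProduct_vecMulVec_self_mulVec (y v : κ → R) :
    v ⬝ᵥ vecMulVec y y *ᵥ v = (y ⬝ᵥ v) ^ 2 := by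
  rw [vecMulVec_mulVec, op_smul_eq_smul, dotProduct_smul, smul_eq_mul, dotProduct_comm, sq]

end

lemma div_one_add_sub_div_one_sub {K : Type*} [Field K] {a : K} (ha : 1 - a ^ 2 ≠ 0) (u v : K) :
    (u + v) / (1 + a) - (u - v) / (1 - a) = 2 / (1 - a ^ 2) * (v - a * u) := by
  have hplus : 1 + a ≠ 0 := fun h => ha (by linear_combination (1 - a) * h)
  have hminus : 1 - a ≠ 0 := fun h => ha (by linear_combination (1 + a) * h)
  field_simp
  ring

lemma dot3_eq_dotProduct (u v : Fin 3 → ℝ) : dot3 u v = u ⬝ᵥ v := rfl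

theorem stmt2_general (x y n : Fin 3 → ℝ) (T : Matrix (Fin 3) (Fin 3) ℝ)
    (hden : 1 - (dot3 y n) ^ 2 ≠ 0) :
    ∀ (m M : Matrix (Fin 3) (Fin 3) ℝ) (xt0 xt1 : Fin 3 → ℝ),
      m = T - vecMulVec x y →
      M = mᵀ * m →
      xt0 = (fun i => (x i + T.mulVec n i) / (1 + dot3 y n)) →
      xt1 = (fun i => (x i + T.mulVec (-n) i) / (1 + dot3 y (-n))) →
      ∑ i, (xt0 i - xt1 i) ^ 2 =
        4 * dot3 n (M.mulVec n) / (1 - dot3 n ((vecMulVec y y).mulVec n)) ^ 2 := by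
  intro m M xt0 xt1 hm hM h0 h1
  subst hm hM h0 h1
  simp only [dot3_eq_dotProduct] at hden ⊢
  have hdiff : ∀ i, (x i + (T *ᵥ n) i) / (1 + y ⬝ᵥ n) - (x i + (T *ᵥ -n) i) / (1 + y ⬝ᵥ -n) =
      2 / (1 - (y ⬝ᵥ n) ^ 2) * ((T - vecMulVec x y) *ᵥ n) i := by
    intro i
    rw [mulVec_neg, dotProduct_neg, Pi.neg_apply, ← sub_eq_add_neg, ← sub_eq_add_neg,
      div_one_add_sub_div_one_sub hden, sub_vecMulVec_mulVec]
    simp only [Pi.sub_apply, Pi.smul_apply, smul_eq_mul]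
  rw [Finset.sum_congr rfl fun i _ => by rw [hdiff i], dotProduct_transpose_mul_self_mulVec,
    dotProduct_vecMulVec_self_mulVec]
  simp only [mul_pow, div_pow, ← Finset.mul_sum, dotProduct, ← sq]
  ring

theorem stmt2 (x y n : Fin 3 → ℝ) (T : Matrix (Fin 3) (Fin 3) ℝ)
    (hn : dot3 n n = 1) (hden : 1 - (dot3 y n) ^ 2 ≠ 0) :
    ∀ (m M : Matrix (Fin 3) (Fin 3) ℝ) (xt0 xt1 : Fin 3 → ℝ),
      m = T - vecMulVec x y →
      M = mᵀ * m →
      xt0 = (fun i => (x i + T.mulVec n i) / (1 + dot3 y n)) →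
      xt1 = (fun i => (x i + T.mulVec (-n) i) / (1 + dot3 y (-n))) →
      ∑ i, (xt0 i - xt1 i) ^ 2 =
        4 * dot3 n (M.mulVec n) / (1 - dot3 n ((vecMulVec y y).mulVec n)) ^ 2 :=
  stmt2_general x y n T hden
end
end

section
/- Let M = diag(M₁, M₂, M₃) with M₁ ≥ M₂ ≥ 0, M₃ ≥ 0, M₁ ≥ M₃, and let Y = diag(0,0,y²) with 0 ≤ y < 1. If (2M₃/(M₁+M₃))² ≤ (1−y²)² ≤ ((M₁+M₃)/(2M₁))² (with M₁+M₃ > 0), then the maximum over unit vectors n̂ ∈ ℝ³ of f(n̂) = 4 n̂ᵗ M n̂/(1 − n̂ᵗYn̂)² is attained at a vector with n̂₂ = 0 and n̂₃² = (2M₁y² − (M₁−M₃))/((M₁−M₃)y²) (when M₁ > M₃ and y > 0). -/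
open Matrix Complex Kronecker
open scoped ComplexOrder

noncomputable section

/-! On the unit sphere `M₂ ≤ M₁` lets us move all weight from `n₂` to `n₁`, so `f(n) ≤ g(n₃²)` with
`g(t) = 4 (M₁ - (M₁ - M₃) t) / (1 - y² t)²`. The value `c` in the statement is the critical point of
`g`, and `g(c) - g(t)` is a nonnegative multiple of `(t - c)²`: the two bounds on `(1 - y²)²` say
exactly that `0 ≤ c ≤ 1` and that `y² M₁ ≤ M₁ - M₃`. -/

lemma dot3_self (u : Fin 3 → ℝ) : dot3 u u = u 0 ^ 2 + u 1 ^ 2 + u 2 ^ 2 := by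
  simp only [dot3, Fin.sum_univ_three]
  ring

lemma exists_dot3_self_eq_one_of_mem_Icc {c : ℝ} (hc0 : 0 ≤ c) (hc1 : c ≤ 1) :
    ∃ n : Fin 3 → ℝ, dot3 n n = 1 ∧ n 0 ^ 2 = 1 - c ∧ n 1 = 0 ∧ n 2 ^ 2 = c := by
  have h0 : Real.sqrt (1 - c) ^ 2 = 1 - c := Real.sq_sqrt (by linarith)
  have h2 : Real.sqrt c ^ 2 = c := Real.sq_sqrt hc0
  refine ⟨![Real.sqrt (1 - c), 0, Real.sqrt c], ?_, h0, rfl, h2⟩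
  simp only [dot3_self, Matrix.cons_val_zero, Matrix.cons_val_one, Matrix.cons_val_two,
    Matrix.head_cons, Matrix.tail_cons, h0, h2]
  ring

lemma diag_quadratic_le_of_dot3_self_eq_one {M1 M2 M3 : ℝ} (h12 : M2 ≤ M1) {u : Fin 3 → ℝ}
    (hu : dot3 u u = 1) :
    M1 * u 0 ^ 2 + M2 * u 1 ^ 2 + M3 * u 2 ^ 2 ≤ M1 - (M1 - M3) * u 2 ^ 2 := by
  rw [dot3_self] at hu
  linear_combination mul_le_mul_of_nonneg_right h12 (sq_nonneg (u 1)) + M1 * hu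

section Critical

variable {a b s c : ℝ}

/-- `hc` says that `c` is the critical point of `t ↦ (b - a t) / (1 - s t)²`. -/
lemma critical_identity (hc : a * s * c = 2 * b * s - a) (t : ℝ) :
    (b - a * c) * (1 - s * t) ^ 2 - (b - a * t) * (1 - s * c) ^ 2 =
      s * (a - b * s) * (t - c) ^ 2 := by
  linear_combination (t - c) * (1 - s * t) * hc

lemma div_sq_le_div_sq_of_critical (hc : a * s * c = 2 * b * s - a) (hab : 0 ≤ s * (a - b * s))
    (hc1 : 0 < 1 - s * c) {t : ℝ} (ht : 0 < 1 - s * t) :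
    (b - a * t) / (1 - s * t) ^ 2 ≤ (b - a * c) / (1 - s * c) ^ 2 := by
  rw [div_le_div_iff₀ (by positivity) (by positivity)]
  linarith [critical_identity hc t, mul_nonneg hab (sq_nonneg (t - c))]

end Critical

lemma sub_le_two_mul_of_sq_le {M1 M3 s : ℝ} (hs : s ≤ 1) (hM1 : 0 < M1) (hsum : 0 < M1 + M3)
    (h : (1 - s) ^ 2 ≤ ((M1 + M3) / (2 * M1)) ^ 2) : M1 - M3 ≤ 2 * M1 * s := by
  rw [pow_le_pow_iff_left₀ (by linarith) (by positivity) two_ne_zero,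
    le_div_iff₀ (by positivity)] at h
  linarith

lemma mul_add_le_sub_of_sq_le {M1 M3 s : ℝ} (hs : s ≤ 1) (h3 : 0 ≤ M3) (hsum : 0 < M1 + M3)
    (h : (2 * M3 / (M1 + M3)) ^ 2 ≤ (1 - s) ^ 2) : s * (M1 + M3) ≤ M1 - M3 := by
  rw [pow_le_pow_iff_left₀ (by positivity) (by linarith) two_ne_zero, div_le_iff₀ hsum] at h
  linarith

theorem stmt5_general (M1 M2 M3 y : ℝ) (h12 : M1 ≥ M2) (h3 : M3 ≥ 0)
    (h13 : M1 > M3) (hy0 : 0 < y) (hy1 : y < 1) (hsum : M1 + M3 > 0)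
    (hlo : (2 * M3 / (M1 + M3)) ^ 2 ≤ (1 - y ^ 2) ^ 2)
    (hhi : (1 - y ^ 2) ^ 2 ≤ ((M1 + M3) / (2 * M1)) ^ 2) :
    ∃ n : Fin 3 → ℝ, dot3 n n = 1 ∧ n 1 = 0 ∧
      (n 2) ^ 2 = (2 * M1 * y ^ 2 - (M1 - M3)) / ((M1 - M3) * y ^ 2) ∧
      IsGreatest {v : ℝ | ∃ u : Fin 3 → ℝ, dot3 u u = 1 ∧
          v = 4 * (M1 * (u 0) ^ 2 + M2 * (u 1) ^ 2 + M3 * (u 2) ^ 2) /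
            (1 - y ^ 2 * (u 2) ^ 2) ^ 2}
        (4 * (M1 * (n 0) ^ 2 + M2 * (n 1) ^ 2 + M3 * (n 2) ^ 2) /
          (1 - y ^ 2 * (n 2) ^ 2) ^ 2) := by
  have hM1 : 0 < M1 := h3.trans_lt h13
  have hA : 0 < M1 - M3 := sub_pos.mpr h13
  set s := y ^ 2
  have hs0 : 0 < s := by positivity
  have hs1 : s < 1 := by nlinarith
  have hhi' := sub_le_two_mul_of_sq_le hs1.le hM1 hsum hhi
  have hlo' := mul_add_le_sub_of_sq_le hs1.le h3 hsum hlo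
  set c := (2 * M1 * s - (M1 - M3)) / ((M1 - M3) * s)
  have hcrit : (M1 - M3) * s * c = 2 * M1 * s - (M1 - M3) := mul_div_cancel₀ _ (by positivity)
  have hc0 : 0 ≤ c := div_nonneg (by linarith) (by positivity)
  have hc1 : c ≤ 1 := by
    rw [div_le_one (by positivity)]
    nlinarith
  obtain ⟨n, hn, hn0, hn1, hn2⟩ := exists_dot3_self_eq_one_of_mem_Icc hc0 hc1
  refine ⟨n, hn, hn1, hn2, ⟨n, hn, rfl⟩, ?_⟩
  rintro _ ⟨u, hu, rfl⟩
  have ht : 0 < 1 - s * u 2 ^ 2 := by nlinarith [dot3_self u, sq_nonneg (u 0), sq_nonneg (u 1)]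
  have hval : 4 * (M1 * n 0 ^ 2 + M2 * n 1 ^ 2 + M3 * n 2 ^ 2) / (1 - s * n 2 ^ 2) ^ 2 =
      4 * ((M1 - (M1 - M3) * c) / (1 - s * c) ^ 2) := by
    rw [hn0, hn1, hn2]
    ring
  rw [hval]
  calc 4 * (M1 * u 0 ^ 2 + M2 * u 1 ^ 2 + M3 * u 2 ^ 2) / (1 - s * u 2 ^ 2) ^ 2
      ≤ 4 * ((M1 - (M1 - M3) * u 2 ^ 2) / (1 - s * u 2 ^ 2) ^ 2) := by
        rw [mul_div_assoc]
        gcongr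
        exact diag_quadratic_le_of_dot3_self_eq_one h12 hu
    _ ≤ 4 * ((M1 - (M1 - M3) * c) / (1 - s * c) ^ 2) := by
        refine mul_le_mul_of_nonneg_left ?_ zero_le_four
        exact div_sq_le_div_sq_of_critical hcrit (by nlinarith) (by nlinarith) ht

theorem stmt5 (M1 M2 M3 y : ℝ) (h12 : M1 ≥ M2) (h2 : M2 ≥ 0) (h3 : M3 ≥ 0)
    (h13 : M1 > M3) (hy0 : 0 < y) (hy1 : y < 1) (hsum : M1 + M3 > 0)
    (hlo : (2 * M3 / (M1 + M3)) ^ 2 ≤ (1 - y ^ 2) ^ 2)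
    (hhi : (1 - y ^ 2) ^ 2 ≤ ((M1 + M3) / (2 * M1)) ^ 2) :
    ∃ n : Fin 3 → ℝ, dot3 n n = 1 ∧ n 1 = 0 ∧
      (n 2) ^ 2 = (2 * M1 * y ^ 2 - (M1 - M3)) / ((M1 - M3) * y ^ 2) ∧
      IsGreatest {v : ℝ | ∃ u : Fin 3 → ℝ, dot3 u u = 1 ∧
          v = 4 * (M1 * (u 0) ^ 2 + M2 * (u 1) ^ 2 + M3 * (u 2) ^ 2) /
            (1 - y ^ 2 * (u 2) ^ 2) ^ 2}
        (4 * (M1 * (n 0) ^ 2 + M2 * (n 1) ^ 2 + M3 * (n 2) ^ 2) /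
          (1 - y ^ 2 * (n 2) ^ 2) ^ 2) :=
  stmt5_general M1 M2 M3 y h12 h3 h13 hy0 hy1 hsum hlo hhi
end
end

section
/- Let M = diag(M₁, M₂, M₃) with M₁ ≥ M₂ ≥ 0 and M₁ ≥ M₃ ≥ 0, and 0 ≤ y < 1. If (1 − y²)² ≥ ((M₁+M₃)/(2M₁))² (with M₁ > 0), then max over unit n̂ of f(n̂) = 4 n̂ᵗ M n̂/(1 − y²n̂₃²)² equals 4M₁, attained at n̂ = (1,0,0)ᵗ. -/
open Matrix Complex Kronecker
open scoped ComplexOrder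

noncomputable section

/-! Write `t = n̂₃²`. Since `M₂ ≤ M₁`, the numerator is at most `M₁(1 - t) + M₃ t`, while
`(1 - y²t)² ≥ 1 - 2y²t`. The hypothesis says exactly `2M₁y² ≤ M₁ - M₃`, so
`M₁(1 - t) + M₃ t ≤ M₁(1 - 2y²t) ≤ M₁(1 - y²t)²`, i.e. `f(n̂) ≤ 4M₁`, with equality at `n̂ = e₁`. -/

lemma two_mul_mul_sq_le_sub_of_sq_le {M1 M3 y : ℝ} (hM1 : 0 < M1) (hy : 0 ≤ 1 - y ^ 2)
    (h : ((M1 + M3) / (2 * M1)) ^ 2 ≤ (1 - y ^ 2) ^ 2) : 2 * M1 * y ^ 2 ≤ M1 - M3 := by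
  have hratio : (M1 + M3) / (2 * M1) ≤ 1 - y ^ 2 := le_of_sq_le_sq h hy
  rw [div_le_iff₀ (by positivity)] at hratio
  linarith

lemma diag_quadForm_le {M1 M2 M3 a b t : ℝ} (h12 : M2 ≤ M1) (hb : 0 ≤ b)
    (hsum : a + b + t = 1) : M1 * a + M2 * b + M3 * t ≤ M1 - (M1 - M3) * t := by
  linear_combination mul_le_mul_of_nonneg_right h12 hb + M1 * hsum

lemma mul_one_sub_two_mul_le_mul_sq {M : ℝ} (s : ℝ) (hM : 0 ≤ M) :
    M * (1 - 2 * s) ≤ M * (1 - s) ^ 2 :=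
  mul_le_mul_of_nonneg_left (by nlinarith [sq_nonneg s]) hM

lemma steered_le_of_dot3_eq_one {M1 M2 M3 y : ℝ} {u : Fin 3 → ℝ} (hu : dot3 u u = 1)
    (h12 : M2 ≤ M1) (hM1 : 0 ≤ M1) (hy : y ^ 2 < 1) (hmargin : 2 * M1 * y ^ 2 ≤ M1 - M3) :
    4 * (M1 * u 0 ^ 2 + M2 * u 1 ^ 2 + M3 * u 2 ^ 2) / (1 - y ^ 2 * u 2 ^ 2) ^ 2 ≤ 4 * M1 := by
  have hsum : u 0 ^ 2 + u 1 ^ 2 + u 2 ^ 2 = 1 := by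
    simpa [dot3, Fin.sum_univ_three, sq] using hu
  have ht1 : u 2 ^ 2 ≤ 1 := by nlinarith [sq_nonneg (u 0), sq_nonneg (u 1)]
  have hden : 0 < 1 - y ^ 2 * u 2 ^ 2 := by nlinarith [sq_nonneg y]
  rw [div_le_iff₀ (by positivity)]
  calc 4 * (M1 * u 0 ^ 2 + M2 * u 1 ^ 2 + M3 * u 2 ^ 2)
      ≤ 4 * (M1 - (M1 - M3) * u 2 ^ 2) := by
        gcongr; exact diag_quadForm_le h12 (sq_nonneg _) hsum
    _ ≤ 4 * (M1 * (1 - 2 * (y ^ 2 * u 2 ^ 2))) := by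
        linear_combination 4 * mul_le_mul_of_nonneg_right hmargin (sq_nonneg (u 2))
    _ ≤ 4 * M1 * (1 - y ^ 2 * u 2 ^ 2) ^ 2 := by
        linear_combination 4 * mul_one_sub_two_mul_le_mul_sq (y ^ 2 * u 2 ^ 2) hM1

theorem stmt6_general (M1 M2 M3 y : ℝ) (h12 : M1 ≥ M2)
    (hy0 : 0 ≤ y) (hy1 : y < 1) (hM1 : M1 > 0)
    (hcond : (1 - y ^ 2) ^ 2 ≥ ((M1 + M3) / (2 * M1)) ^ 2) :
    IsGreatest {v : ℝ | ∃ u : Fin 3 → ℝ, dot3 u u = 1 ∧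
        v = 4 * (M1 * (u 0) ^ 2 + M2 * (u 1) ^ 2 + M3 * (u 2) ^ 2) /
          (1 - y ^ 2 * (u 2) ^ 2) ^ 2}
      (4 * M1) ∧
    4 * (M1 * ((![1, 0, 0] : Fin 3 → ℝ) 0) ^ 2 + M2 * ((![1, 0, 0] : Fin 3 → ℝ) 1) ^ 2
        + M3 * ((![1, 0, 0] : Fin 3 → ℝ) 2) ^ 2) /
      (1 - y ^ 2 * ((![1, 0, 0] : Fin 3 → ℝ) 2) ^ 2) ^ 2 = 4 * M1 := by
  have hy : y ^ 2 < 1 := by nlinarith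
  have hmargin := two_mul_mul_sq_le_sub_of_sq_le hM1 (by linarith) hcond
  have hvalue : 4 * (M1 * ((![1, 0, 0] : Fin 3 → ℝ) 0) ^ 2 + M2 * ((![1, 0, 0] : Fin 3 → ℝ) 1) ^ 2
      + M3 * ((![1, 0, 0] : Fin 3 → ℝ) 2) ^ 2) /
      (1 - y ^ 2 * ((![1, 0, 0] : Fin 3 → ℝ) 2) ^ 2) ^ 2 = 4 * M1 := by
    simp
  refine ⟨⟨⟨![1, 0, 0], by simp [dot3, Fin.sum_univ_three], hvalue.symm⟩, ?_⟩, hvalue⟩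
  rintro v ⟨u, hu, rfl⟩
  exact steered_le_of_dot3_eq_one hu h12 hM1.le hy hmargin

theorem stmt6 (M1 M2 M3 y : ℝ) (h12 : M1 ≥ M2) (h2 : M2 ≥ 0)
    (h13 : M1 ≥ M3) (h3 : M3 ≥ 0) (hy0 : 0 ≤ y) (hy1 : y < 1) (hM1 : M1 > 0)
    (hcond : (1 - y ^ 2) ^ 2 ≥ ((M1 + M3) / (2 * M1)) ^ 2) :
    IsGreatest {v : ℝ | ∃ u : Fin 3 → ℝ, dot3 u u = 1 ∧
        v = 4 * (M1 * (u 0) ^ 2 + M2 * (u 1) ^ 2 + M3 * (u 2) ^ 2) /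
          (1 - y ^ 2 * (u 2) ^ 2) ^ 2}
      (4 * M1) ∧
    4 * (M1 * ((![1, 0, 0] : Fin 3 → ℝ) 0) ^ 2 + M2 * ((![1, 0, 0] : Fin 3 → ℝ) 1) ^ 2
        + M3 * ((![1, 0, 0] : Fin 3 → ℝ) 2) ^ 2) /
      (1 - y ^ 2 * ((![1, 0, 0] : Fin 3 → ℝ) 2) ^ 2) ^ 2 = 4 * M1 :=
  stmt6_general M1 M2 M3 y h12 hy0 hy1 hM1 hcond
end
end

section
/- Let M = diag(M₁, M₂, M₃) with M₁ ≥ M₂ ≥ 0 and M₁ ≥ M₃ ≥ 0, and 0 ≤ y < 1. If (1 − y²)² ≤ (2M₃/(M₁+M₃))² (with M₁+M₃ > 0), then max over unit n̂ of f(n̂) = 4 n̂ᵗ M n̂/(1 − y²n̂₃²)² equals 4M₃/(1 − y²)², attained at n̂ = (0,0,1)ᵗ. -/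
open Matrix Complex Kronecker
open scoped ComplexOrder

noncomputable section

lemma mul_add_le_two_mul_of_sq_le {d M₁ M₃ : ℝ} (hd : 0 ≤ d) (hM₃ : 0 ≤ M₃)
    (h : d ^ 2 ≤ (2 * M₃ / (M₁ + M₃)) ^ 2) : d * (M₁ + M₃) ≤ 2 * M₃ := by
  rcases le_or_gt (M₁ + M₃) 0 with hsum | hsum
  · nlinarith
  · have hle : d ≤ 2 * M₃ / (M₁ + M₃) := pow_le_pow_iff_left₀ hd (by positivity) two_ne_zero |>.mp h
    rwa [le_div_iff₀ hsum] at hle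

lemma mul_sq_le_mul_sq_of_mul_add_le {t c M₁ M₃ : ℝ} (hc : c ≤ 1) (ht : t ≤ 1) (hM₃ : 0 ≤ M₃)
    (hkey : (1 - t) * (M₁ + M₃) ≤ 2 * M₃) :
    (M₁ * (1 - c) + M₃ * c) * (1 - t) ^ 2 ≤ M₃ * (1 - t * c) ^ 2 := by
  have hfactor : M₃ * (1 - t * c) ^ 2 - (M₁ * (1 - c) + M₃ * c) * (1 - t) ^ 2
      = (1 - c) * ((1 - t) * (2 * M₃ - (1 - t) * (M₁ + M₃)) + M₃ * t ^ 2 * (1 - c)) := by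
    ring
  have hnonneg : 0 ≤ (1 - c) * ((1 - t) * (2 * M₃ - (1 - t) * (M₁ + M₃)) + M₃ * t ^ 2 * (1 - c)) := by
    have := sub_nonneg.2 hkey
    have := sub_nonneg.2 hc
    have := sub_nonneg.2 ht
    positivity
  linarith

lemma objective_le_of_add_add_eq_one {M₁ M₂ M₃ y : ℝ} (h₁₂ : M₂ ≤ M₁) (hM₃ : 0 ≤ M₃)
    (hy : y ^ 2 < 1) (hkey : (1 - y ^ 2) * (M₁ + M₃) ≤ 2 * M₃) {a b c : ℝ}
    (ha : 0 ≤ a) (hb : 0 ≤ b) (habc : a + b + c = 1) :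
    4 * (M₁ * a + M₂ * b + M₃ * c) / (1 - y ^ 2 * c) ^ 2 ≤ 4 * M₃ / (1 - y ^ 2) ^ 2 := by
  have hc1 : c ≤ 1 := by linarith
  have hden : 0 < 1 - y ^ 2 := by linarith
  have hden_c : 0 < 1 - y ^ 2 * c := by nlinarith [sq_nonneg y]
  rw [div_le_div_iff₀ (by positivity) (by positivity)]
  have hnum : M₁ * a + M₂ * b + M₃ * c ≤ M₁ * (1 - c) + M₃ * c := by
    have hab : a = 1 - b - c := by linarith
    subst hab
    nlinarith [mul_nonneg (sub_nonneg.2 h₁₂) hb]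
  calc 4 * (M₁ * a + M₂ * b + M₃ * c) * (1 - y ^ 2) ^ 2
      ≤ 4 * ((M₁ * (1 - c) + M₃ * c) * (1 - y ^ 2) ^ 2) := by
        rw [mul_assoc]; gcongr
    _ ≤ 4 * (M₃ * (1 - y ^ 2 * c) ^ 2) := by
        exact mul_le_mul_of_nonneg_left (mul_sq_le_mul_sq_of_mul_add_le hc1 hy.le hM₃ hkey)
          (by norm_num)
    _ = 4 * M₃ * (1 - y ^ 2 * c) ^ 2 := by ring

theorem stmt7_general (M1 M2 M3 y : ℝ) (h12 : M1 ≥ M2)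
    (h3 : M3 ≥ 0) (hy0 : 0 ≤ y) (hy1 : y < 1)
    (hcond : (1 - y ^ 2) ^ 2 ≤ (2 * M3 / (M1 + M3)) ^ 2) :
    IsGreatest {v : ℝ | ∃ u : Fin 3 → ℝ, dot3 u u = 1 ∧
        v = 4 * (M1 * (u 0) ^ 2 + M2 * (u 1) ^ 2 + M3 * (u 2) ^ 2) /
          (1 - y ^ 2 * (u 2) ^ 2) ^ 2}
      (4 * M3 / (1 - y ^ 2) ^ 2) ∧
    4 * (M1 * ((![0, 0, 1] : Fin 3 → ℝ) 0) ^ 2 + M2 * ((![0, 0, 1] : Fin 3 → ℝ) 1) ^ 2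
        + M3 * ((![0, 0, 1] : Fin 3 → ℝ) 2) ^ 2) /
      (1 - y ^ 2 * ((![0, 0, 1] : Fin 3 → ℝ) 2) ^ 2) ^ 2 = 4 * M3 / (1 - y ^ 2) ^ 2 := by
  have hy : y ^ 2 < 1 := by nlinarith
  have hkey := mul_add_le_two_mul_of_sq_le (by linarith) h3 hcond
  refine ⟨⟨⟨![0, 0, 1], by simp [dot3_self], by simp⟩, ?_⟩, by simp⟩
  rintro v ⟨u, hu, rfl⟩
  rw [dot3_self] at hu
  exact objective_le_of_add_add_eq_one h12 h3 hy hkey (sq_nonneg _) (sq_nonneg _) hu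

theorem stmt7 (M1 M2 M3 y : ℝ) (h12 : M1 ≥ M2) (h2 : M2 ≥ 0)
    (h13 : M1 ≥ M3) (h3 : M3 ≥ 0) (hy0 : 0 ≤ y) (hy1 : y < 1) (hsum : M1 + M3 > 0)
    (hcond : (1 - y ^ 2) ^ 2 ≤ (2 * M3 / (M1 + M3)) ^ 2) :
    IsGreatest {v : ℝ | ∃ u : Fin 3 → ℝ, dot3 u u = 1 ∧
        v = 4 * (M1 * (u 0) ^ 2 + M2 * (u 1) ^ 2 + M3 * (u 2) ^ 2) /
          (1 - y ^ 2 * (u 2) ^ 2) ^ 2}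
      (4 * M3 / (1 - y ^ 2) ^ 2) ∧
    4 * (M1 * ((![0, 0, 1] : Fin 3 → ℝ) 0) ^ 2 + M2 * ((![0, 0, 1] : Fin 3 → ℝ) 1) ^ 2
        + M3 * ((![0, 0, 1] : Fin 3 → ℝ) 2) ^ 2) /
      (1 - y ^ 2 * ((![0, 0, 1] : Fin 3 → ℝ) 2) ^ 2) ^ 2 = 4 * M3 / (1 - y ^ 2) ^ 2 :=
  stmt7_general M1 M2 M3 y h12 h3 hy0 hy1 hcond
end
end
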